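/- Let Γ be the free group on p ≥ 2 generators, 𝔠 a non-trivial conjugacy class with minimal word length k, and h = log(2p-1). Then the limit lim_{m→∞} #𝔠_{k+2m}/e^{mh} exists and equals (2p-2)(2p-1)^{-1}·#𝔠_k, where #𝔠_n is the number of elements of 𝔠 of word length n. -/

import Mathlib

/-!
Write the reduced word of `x` as `u ++ r ++ invRev u` with `r` cyclically reduced (Mathlib's
`conjugator` and `reduceCyclically`). Then `norm (x ^ n) = n * |r| + 2 * |u|`, so `|r|` is the
stable norm `lim norm (x ^ n) / n`; as `norm (g * x ^ n * g⁻¹) ≤ norm (x ^ n) + 2 * norm g`, it is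
a class function, and it is the minimal length `k` in the conjugacy class `𝔠` of `c`.

An element of `𝔠` of length `n + 2 > k` has a non-trivial conjugator, so its word is
`a :: (s ++ [a⁻¹])` with `mk s ∈ 𝔠_n`; conversely, for `y ∈ 𝔠_n` the word `a :: (y ++ [a⁻¹])`
represents an element of `𝔠_{n+2}` whenever it is reduced, i.e. whenever the letter `a` avoids the
inverse of the first letter of `y` and the last letter of `y`. These two letters coincide for `n > k` and are distinct for `n = k` (otherwise `y`
would be conjugate to a shorter word). Hence `#𝔠_{k+2} = (2p-2) #𝔠_k` and
`#𝔠_{n+2} = (2p-1) #𝔠_n` for `n > k`, and the sequence of the theorem is constant from `m = 1` on.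
-/

open Filter
open scoped Topology

namespace FreeGroup
open reduceCyclically

section Words

variable {α : Type*}

theorem isReduced_cons_append_inv_iff {w : List (α × Bool)} (hw : w ≠ []) (a : α × Bool) :
    IsReduced (a :: (w ++ [(a.1, !a.2)])) ↔
      IsReduced w ∧ a ≠ ((w.head hw).1, !(w.head hw).2) ∧ a ≠ w.getLast hw := by
  have rel_iff {b d : α × Bool} : (b.1 = d.1 → b.2 = d.2) ↔ b ≠ (d.1, !d.2) := by
    obtain ⟨b1, b2⟩ := b; obtain ⟨d1, d2⟩ := d; cases b2 <;> cases d2 <;> simp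
  obtain ⟨b, t, rfl⟩ := List.exists_cons_of_ne_nil hw
  simp only [IsReduced, ← List.cons_append, List.isChain_append, List.isChain_cons_cons,
    List.getLast?_cons_cons, List.getLast?_eq_some_getLast hw, rel_iff]
  simp only [ne_eq, List.IsChain.singleton, Option.mem_def, Option.some.injEq, List.head?_cons,
    forall_eq', Bool.not_not, Prod.mk.eta, ne_comm (b := a), true_and, List.head_cons]
  tauto

theorem mk_cons_append_inv (a : α × Bool) (L : List (α × Bool)) :
    mk (a :: (L ++ [(a.1, !a.2)])) = mk [a] * mk L * (mk [a])⁻¹ := by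
  simp [inv_mk, mul_mk, invRev]

end Words

variable {α : Type*} [DecidableEq α]

def cyclicNorm (x : FreeGroup α) : ℕ := (reduceCyclically x.toWord).length

theorem norm_pow (x : FreeGroup α) {n : ℕ} (hn : n ≠ 0) :
    norm (x ^ n) = n * cyclicNorm x + 2 * (conjugator x.toWord).length := by
  simp [norm, cyclicNorm, toWord_pow, reduce_flatten_replicate isReduced_toWord, hn]
  ring

theorem norm_eq_cyclicNorm_add (x : FreeGroup α) :
    norm x = cyclicNorm x + 2 * (conjugator x.toWord).length := by
  simpa using norm_pow x one_ne_zero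

theorem cyclicNorm_le_norm (x : FreeGroup α) : cyclicNorm x ≤ norm x := by
  rw [norm_eq_cyclicNorm_add]; omega

theorem cyclicNorm_le_of_isConj {x y : FreeGroup α} (h : IsConj x y) :
    cyclicNorm y ≤ cyclicNorm x := by
  obtain ⟨g, rfl⟩ := isConj_iff.1 h
  -- `N` exceeds the additive error in `norm (g * x ^ N * g⁻¹) ≤ N * cyclicNorm x + const`.
  set N := 2 * (conjugator x.toWord).length + 2 * norm g + 1
  have hconj : norm ((g * x * g⁻¹) ^ N) ≤ norm g + norm (x ^ N) + norm g := by
    rw [conj_pow]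
    calc norm (g * x ^ N * g⁻¹) ≤ norm (g * x ^ N) + norm g⁻¹ := norm_mul_le _ _
      _ ≤ norm g + norm (x ^ N) + norm g := by rw [norm_inv_eq]; gcongr; exact norm_mul_le _ _
  rw [norm_pow _ (by omega), norm_pow _ (by omega)] at hconj
  have : N * cyclicNorm (g * x * g⁻¹) < N * (cyclicNorm x + 1) := by
    rw [mul_add]; omega
  exact Nat.lt_succ_iff.1 (Nat.lt_of_mul_lt_mul_left this)

theorem cyclicNorm_eq_of_isConj {x y : FreeGroup α} (h : IsConj x y) :
    cyclicNorm x = cyclicNorm y :=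
  le_antisymm (cyclicNorm_le_of_isConj h.symm) (cyclicNorm_le_of_isConj h)

theorem isLeast_norm_of_isConj (x : FreeGroup α) :
    IsLeast {n | ∃ y, IsConj x y ∧ norm y = n} (cyclicNorm x) := by
  refine ⟨?_, fun n ⟨y, hy, hn⟩ => hn ▸ cyclicNorm_eq_of_isConj hy ▸ cyclicNorm_le_norm y⟩
  set y := mk (reduceCyclically x.toWord)
  have hy : IsConj y x := isConj_iff.2 ⟨mk (conjugator x.toWord), by
    rw [inv_mk, mul_mk, mul_mk, conj_conjugator_reduceCyclically, mk_toWord]⟩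
  exact ⟨y, hy.symm, le_antisymm norm_mk_le (cyclicNorm_eq_of_isConj hy ▸ cyclicNorm_le_norm y)⟩

theorem isConj_mk_cons_append_inv (y : FreeGroup α) (a : α × Bool) :
    IsConj y (mk (a :: (y.toWord ++ [(a.1, !a.2)]))) :=
  isConj_iff.2 ⟨mk [a], by rw [mk_cons_append_inv, mk_toWord]⟩

theorem exists_toWord_eq_cons_append_of_cyclicNorm_lt {x : FreeGroup α}
    (h : cyclicNorm x < norm x) : ∃ a s, x.toWord = a :: (s ++ [(a.1, !a.2)]) := by
  rw [norm_eq_cyclicNorm_add] at h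
  obtain ⟨a, u, hu⟩ := List.exists_cons_of_ne_nil (fun h' => by simp [h'] at h :
    conjugator x.toWord ≠ [])
  refine ⟨a, u ++ reduceCyclically x.toWord ++ invRev u, ?_⟩
  conv_lhs => rw [← conj_conjugator_reduceCyclically x.toWord, hu]
  simp [invRev]

theorem getLast_ne_inv_head_of_norm_eq_cyclicNorm {x : FreeGroup α}
    (h : norm x = cyclicNorm x) (hx : x.toWord ≠ []) :
    x.toWord.getLast hx ≠ ((x.toWord.head hx).1, !(x.toWord.head hx).2) := by
  intro hlast
  obtain ⟨b, s, hbs⟩ : ∃ b s, x.toWord = b :: (s ++ [(b.1, !b.2)]) := by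
    generalize x.toWord = w at hx hlast
    induction w using List.bidirectionalRec with
    | nil => exact absurd rfl hx
    | singleton b => exact (Bool.not_ne_self b.2 (congrArg Prod.snd hlast).symm).elim
    | cons_append b s d _ => exact ⟨b, s, by simpa using hlast⟩
  have hconj : IsConj x (mk s) :=
    isConj_iff.2 ⟨(mk [b])⁻¹, by rw [← mk_toWord (x := x), hbs, mk_cons_append_inv]; group⟩
  have hnorm : norm x = s.length + 2 := by simp [norm, hbs]
  have := (cyclicNorm_eq_of_isConj hconj).trans_le ((cyclicNorm_le_norm _).trans norm_mk_le)
  omega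

instance (L : List (α × Bool)) : Decidable (IsReduced L) :=
  inferInstanceAs (Decidable (L.IsChain _))

open Finset in
theorem card_filter_isReduced_cons_append_inv [Fintype α] {w : List (α × Bool)}
    (hw : IsReduced w) (hne : w ≠ []) :
    #{a | IsReduced (a :: (w ++ [(a.1, !a.2)]))} =
      2 * Fintype.card α - #{((w.head hne).1, !(w.head hne).2), w.getLast hne} := by
  rw [← Fintype.card_bool, mul_comm, ← Fintype.card_prod, ← card_univ,
    ← card_sdiff_of_subset (subset_univ _)]
  congr 1
  ext a
  simp [isReduced_cons_append_inv_iff hne, hw]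

def conjSphere (c : FreeGroup α) (n : ℕ) : Set (FreeGroup α) := {x | IsConj c x ∧ norm x = n}

theorem finite_conjSphere [Finite α] (c : FreeGroup α) (n : ℕ) : (conjSphere c n).Finite :=
  ((List.finite_length_eq _ n).preimage toWord_injective.injOn).subset fun _ hx => hx.2

open Finset in
theorem ncard_conjSphere_add_two [Fintype α] {c : FreeGroup α} {n f : ℕ}
    (hn : cyclicNorm c ≤ n)
    (hf : ∀ y ∈ conjSphere c n, #{a | IsReduced (a :: (y.toWord ++ [(a.1, !a.2)]))} = f) :
    (conjSphere c (n + 2)).ncard = f * (conjSphere c n).ncard := by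
  set S := (finite_conjSphere c n).toFinset
  set T := S.sigma fun y => ({a | IsReduced (a :: (y.toWord ++ [(a.1, !a.2)]))} : Finset _)
  set Φ : (Σ _ : FreeGroup α, α × Bool) → FreeGroup α :=
    fun q => mk (q.2 :: (q.1.toWord ++ [(q.2.1, !q.2.2)]))
  have hΦ : ∀ q ∈ T, (Φ q).toWord = q.2 :: (q.1.toWord ++ [(q.2.1, !q.2.2)]) := by
    rintro ⟨y, a⟩ hq
    simp only [T, mem_sigma, mem_filter] at hq
    exact toWord_mk.trans hq.2.2.reduce_eq
  have himage : conjSphere c (n + 2) = Φ '' T := by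
    ext x
    constructor
    · rintro ⟨hcx, hx⟩
      obtain ⟨a, s, hs⟩ := exists_toWord_eq_cons_append_of_cyclicNorm_lt (x := x)
        (by rw [← cyclicNorm_eq_of_isConj hcx]; omega)
      have hred : IsReduced (a :: (s ++ [(a.1, !a.2)])) := hs ▸ isReduced_toWord
      have hs' : (mk s).toWord = s :=
        toWord_mk.trans (hred.infix ⟨[a], [(a.1, !a.2)], rfl⟩).reduce_eq
      have hΦx : Φ ⟨mk s, a⟩ = x := by simp only [Φ, hs', ← hs, mk_toWord]
      have hsx : IsConj (mk s) x := hΦx ▸ isConj_mk_cons_append_inv (mk s) a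
      refine ⟨⟨mk s, a⟩, ?_, hΦx⟩
      simp only [T, S, coe_sigma, Set.mem_sigma_iff, coe_filter, Set.Finite.coe_toFinset,
        mem_univ, true_and, Set.mem_ofPred_eq, hs']
      refine ⟨⟨hcx.trans hsx.symm, ?_⟩, hred⟩
      have : norm x = s.length + 2 := by simp [norm, hs]
      simp only [norm, hs']
      omega
    · rintro ⟨⟨y, a⟩, hq, rfl⟩
      have hy := (finite_conjSphere c n).mem_toFinset.1 (mem_sigma.1 hq).1
      refine ⟨hy.1.trans (isConj_mk_cons_append_inv y a), ?_⟩
      simp [norm, hΦ _ hq, ← hy.2]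
  have hinj : Set.InjOn Φ T := by
    rintro ⟨y, a⟩ hq ⟨y', a'⟩ hq' h
    have := congrArg toWord h
    rw [hΦ _ hq, hΦ _ hq'] at this
    dsimp only at this
    obtain ⟨rfl, hw⟩ := List.cons_eq_cons.1 this
    rw [toWord_injective (List.append_cancel_right hw)]
  rw [himage, hinj.ncard_image, Set.ncard_coe_finset, card_sigma,
    sum_const_nat fun y hy => hf y ((finite_conjSphere c n).mem_toFinset.1 hy),
    Set.ncard_eq_toFinset_card _ (finite_conjSphere c n), mul_comm]

section Counting

variable [Fintype α] {c : FreeGroup α}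

theorem ncard_conjSphere_cyclicNorm_add_two (hc : c ≠ 1) :
    (conjSphere c (cyclicNorm c + 2)).ncard =
      (2 * Fintype.card α - 2) * (conjSphere c (cyclicNorm c)).ncard := by
  refine ncard_conjSphere_add_two le_rfl fun y ⟨hcy, hy⟩ => ?_
  have hne : y.toWord ≠ [] := toWord_eq_nil_iff.not.2 fun h => hc (isConj_one_left.1 (h ▸ hcy))
  rw [card_filter_isReduced_cons_append_inv isReduced_toWord hne, Finset.card_pair
    (getLast_ne_inv_head_of_norm_eq_cyclicNorm (hy.trans (cyclicNorm_eq_of_isConj hcy)) hne).symm]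

theorem ncard_conjSphere_add_two_of_lt {n : ℕ} (hn : cyclicNorm c < n) :
    (conjSphere c (n + 2)).ncard = (2 * Fintype.card α - 1) * (conjSphere c n).ncard := by
  refine ncard_conjSphere_add_two hn.le fun y ⟨hcy, hy⟩ => ?_
  obtain ⟨a, s, hs⟩ := exists_toWord_eq_cons_append_of_cyclicNorm_lt (x := y)
    (by rw [← cyclicNorm_eq_of_isConj hcy]; omega)
  have hne : y.toWord ≠ [] := by simp [hs]
  rw [card_filter_isReduced_cons_append_inv isReduced_toWord hne]
  simp [hs]

theorem ncard_conjSphere_cyclicNorm_add_two_mul (hc : c ≠ 1) (m : ℕ) :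
    (conjSphere c (cyclicNorm c + 2 * (m + 1))).ncard =
      (2 * Fintype.card α - 2) * (2 * Fintype.card α - 1) ^ m *
        (conjSphere c (cyclicNorm c)).ncard := by
  induction m with
  | zero => simpa using ncard_conjSphere_cyclicNorm_add_two hc
  | succ m ih =>
    rw [show cyclicNorm c + 2 * (m + 1 + 1) = cyclicNorm c + 2 * (m + 1) + 2 by ring,
      ncard_conjSphere_add_two_of_lt (by omega), ih]
    ring

end Counting

end FreeGroup

open FreeGroup in
/-- For a non-trivial conjugacy class `𝔠` of the free group on `p ≥ 2` generators with
minimal word length `k`, and `h = log(2p-1)`, the limit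
`lim_{m→∞} #𝔠_{k+2m}/e^{mh}` exists and equals `(2p-2)(2p-1)⁻¹ ⬝ #𝔠_k`. -/
theorem stmt16 (p : ℕ) (hp : 2 ≤ p) (c : FreeGroup (Fin p)) (hc : c ≠ 1) (k : ℕ)
    (hk : IsLeast {n : ℕ | ∃ x : FreeGroup (Fin p), IsConj c x ∧ FreeGroup.norm x = n} k) :
    Tendsto (fun m : ℕ =>
        (Set.ncard {x : FreeGroup (Fin p) | IsConj c x ∧ FreeGroup.norm x = k + 2 * m} : ℝ)
          / Real.exp (m * Real.log (2 * p - 1)))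
      atTop
      (𝓝 ((2 * p - 2) / (2 * p - 1)
        * (Set.ncard {x : FreeGroup (Fin p) | IsConj c x ∧ FreeGroup.norm x = k} : ℝ))) := by
  obtain rfl : k = cyclicNorm c := hk.unique (isLeast_norm_of_isConj c)
  have hp' : (2 : ℝ) ≤ p := by exact_mod_cast hp
  refine tendsto_const_nhds.congr' ?_
  filter_upwards [eventually_ge_atTop 1] with m hm
  obtain ⟨m, rfl⟩ := Nat.exists_eq_add_of_le' hm
  change _ * ((conjSphere c _).ncard : ℝ) = ((conjSphere c _).ncard : ℝ) / _
  have hq : (2 * p - 1 : ℝ) ≠ 0 := by linarith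
  rw [ncard_conjSphere_cyclicNorm_add_two_mul hc, Fintype.card_fin, Real.exp_nat_mul,
    Real.exp_log (by linarith)]
  push_cast [Nat.cast_sub (by omega : 2 ≤ 2 * p), Nat.cast_sub (by omega : 1 ≤ 2 * p)]
  field_simp
  ring
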